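/- Let A be a real m×F matrix with AAᵀ invertible, B a real n×F matrix with BᵀB invertible, Y_s a real m×C matrix, and Y_t a real n×C matrix. Define W_S = Aᵀ(AAᵀ)⁻¹Y_s, W_T = (BᵀB)⁻¹BᵀY_t, and M = (BᵀB)⁻¹Bᵀ. Then the optimal parameter matching objective is bounded by the performance matching objective: ‖W_S − W_T‖_F² ≤ ‖M‖_F² · ‖Y_t − B·W_S‖_F². -/
import Mathlib


open Matrix

/-- Squared Frobenius norm of a real matrix: the sum of squares of the entries. -/
noncomputable def frobSq {m n : ℕ} (M : Matrix (Fin m) (Fin n) ℝ) : ℝ :=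
  ∑ i, ∑ j, (M i j) ^ 2

lemma frobSq_neg {m n : ℕ} (M : Matrix (Fin m) (Fin n) ℝ) : frobSq (-M) = frobSq M := by
  simp [frobSq]

lemma frobSq_mul_le {m n k : ℕ} (M : Matrix (Fin m) (Fin n) ℝ) (X : Matrix (Fin n) (Fin k) ℝ) :
    frobSq (M * X) ≤ frobSq M * frobSq X := by
  unfold frobSq
  have h : ∀ i j, ((M * X) i j) ^ 2 ≤ (∑ l, (M i l) ^ 2) * (∑ l, (X l j) ^ 2) := by
    intro i j
    calc ((M * X) i j) ^ 2 = (∑ l, M i l * X l j) ^ 2 := by rw [Matrix.mul_apply]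
      _ ≤ (∑ l, (M i l) ^ 2) * (∑ l, (X l j) ^ 2) :=
        Finset.sum_mul_sq_le_sq_mul_sq Finset.univ _ _
  calc ∑ i, ∑ j, ((M * X) i j) ^ 2
      ≤ ∑ i, ∑ j, (∑ l, (M i l) ^ 2) * (∑ l, (X l j) ^ 2) := by
        apply Finset.sum_le_sum; intro i _
        apply Finset.sum_le_sum; intro j _
        exact h i j
    _ = (∑ i, ∑ j, (M i j) ^ 2) * (∑ i, ∑ j, (X i j) ^ 2) := by
        have hX : (∑ i, ∑ j, (X i j) ^ 2 : ℝ) = ∑ j, ∑ i, (X i j) ^ 2 :=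
          Finset.sum_comm
        rw [hX, Finset.sum_mul_sum]

/-- Proposition 1 bound: with `W_S = Aᵀ(AAᵀ)⁻¹Y_s`, `W_T = (BᵀB)⁻¹BᵀY_t`, and
`M = (BᵀB)⁻¹Bᵀ`, the optimal parameter matching objective is bounded by the
performance matching objective: `‖W_S − W_T‖_F² ≤ ‖M‖_F²·‖Y_t − B·W_S‖_F²`. -/
theorem param_matching_le_perf_matching {m n F C : ℕ}
    (A : Matrix (Fin m) (Fin F) ℝ) (B : Matrix (Fin n) (Fin F) ℝ)
    (Ys : Matrix (Fin m) (Fin C) ℝ) (Yt : Matrix (Fin n) (Fin C) ℝ)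
    (hA : IsUnit (A * Aᵀ)) (hB : IsUnit (Bᵀ * B)) :
    frobSq (Aᵀ * (A * Aᵀ)⁻¹ * Ys - (Bᵀ * B)⁻¹ * Bᵀ * Yt)
      ≤ frobSq ((Bᵀ * B)⁻¹ * Bᵀ) * frobSq (Yt - B * (Aᵀ * (A * Aᵀ)⁻¹ * Ys)) := by
  set WS := Aᵀ * (A * Aᵀ)⁻¹ * Ys with hWS
  set Mm := (Bᵀ * B)⁻¹ * Bᵀ with hM
  have hinv : (Bᵀ * B)⁻¹ * (Bᵀ * B) = 1 :=
    Matrix.nonsing_inv_mul _ (Matrix.isUnit_iff_isUnit_det _ |>.mp hB)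
  have key : Mm * (Yt - B * WS) = -(WS - Mm * Yt) := by
    rw [Matrix.mul_sub]
    have : Mm * (B * WS) = WS := by
      rw [hM, Matrix.mul_assoc, ← Matrix.mul_assoc Bᵀ B WS, ← Matrix.mul_assoc,
        hinv, Matrix.one_mul]
    rw [this]; abel
  have := frobSq_mul_le Mm (Yt - B * WS)
  rwa [key, frobSq_neg] at this
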